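/- arXiv:2207.02794 — 4 statements merged into one kernel-verified Lean document; each statement's English description precedes it below -/
import Mathlib

section
/- Let M, M′ be d×d positive semidefinite Hermitian matrices that are neighbors, i.e., M′ = M − uu* + vv* for some u, v ∈ ℂ^d with ‖u‖₂ ≤ 1 and ‖v‖₂ ≤ 1. Then the ℓ¹ distance between their sorted eigenvalue vectors satisfies Σ_{i=1}^d |λ_i(M) − λ_i(M′)| ≤ 2. -/
/-!
Weyl monotonicity: if `B - A` is positive semidefinite, then the `i`-th largest eigenvalue of `A`
is at most the `i`-th largest eigenvalue of `B`. So the sorted eigenvalues of `M` and of `M′` both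
dominate those of `A := M - uu*` coordinatewise, and the ℓ¹ distances to them are differences of
traces, `tr (uu*) = ‖u‖²` and `tr (vv*) = ‖v‖²`. The triangle inequality through `A` gives the
bound `‖u‖² + ‖v‖² ≤ 2`.
-/

open Matrix
open scoped ComplexOrder InnerProductSpace

section OrthonormalBasis

variable {ι 𝕜 E : Type*} [Fintype ι] [RCLike 𝕜] [NormedAddCommGroup E] [InnerProductSpace 𝕜 E]

lemma OrthonormalBasis.repr_apply_eq_zero_of_mem_span (b : OrthonormalBasis ι 𝕜 E) {s : Set ι}
    {x : E} (hx : x ∈ Submodule.span 𝕜 (b '' s)) {j : ι} (hj : j ∉ s) : b.repr x j = 0 := by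
  have := b.toBasis.repr_support_subset_of_mem_span s (by simpa using hx)
  simpa using mt (@this j) hj

lemma OrthonormalBasis.finrank_span_image (b : OrthonormalBasis ι 𝕜 E) (s : Finset ι) :
    Module.finrank 𝕜 (Submodule.span 𝕜 (b '' s)) = s.card := by
  have hli : LinearIndependent 𝕜 (fun j : s => b j) :=
    b.orthonormal.linearIndependent.comp _ Subtype.val_injective
  have hrange : Set.range (fun j : s => b j) = b '' s := by ext; simp
  rw [← hrange, finrank_span_eq_card hli, Fintype.card_coe]

end OrthonormalBasis

namespace Matrix

variable {𝕜 n : Type*} [RCLike 𝕜] [Fintype n]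

lemma re_trace_vecMulVec_self_star (w : EuclideanSpace 𝕜 n) :
    RCLike.re (vecMulVec w.ofLp (star w.ofLp)).trace = ‖w‖ ^ 2 := by
  rw [trace_vecMulVec, ← EuclideanSpace.inner_eq_star_dotProduct, inner_self_eq_norm_sq]

variable [DecidableEq n] {A B : Matrix n n 𝕜}

lemma re_inner_toEuclideanLin_le_of_posSemidef_sub (hAB : (B - A).PosSemidef)
    (x : EuclideanSpace 𝕜 n) :
    RCLike.re ⟪x, toEuclideanLin A x⟫_𝕜 ≤ RCLike.re ⟪x, toEuclideanLin B x⟫_𝕜 := by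
  have hx : 0 ≤ ⟪x, toEuclideanLin (B - A) x⟫_𝕜 := by
    rw [EuclideanSpace.inner_eq_star_dotProduct, dotProduct_comm]
    exact hAB.dotProduct_mulVec_nonneg x
  rw [map_sub, LinearMap.sub_apply, inner_sub_right] at hx
  simpa using (RCLike.nonneg_iff.mp hx).1

namespace IsHermitian

lemma toEuclideanLin_eigenvectorBasis (hA : A.IsHermitian) (j : n) :
    toEuclideanLin A (hA.eigenvectorBasis j) = (hA.eigenvalues j : 𝕜) • hA.eigenvectorBasis j := by
  apply WithLp.ofLp_injective
  rw [ofLp_toLpLin, toLin'_apply, hA.mulVec_eigenvectorBasis, WithLp.ofLp_smul,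
    RCLike.real_smul_eq_coe_smul (K := 𝕜)]

lemma re_inner_toEuclideanLin_sub_mul_norm_sq (hA : A.IsHermitian) (x : EuclideanSpace 𝕜 n)
    (c : ℝ) : RCLike.re ⟪x, toEuclideanLin A x⟫_𝕜 - c * ‖x‖ ^ 2 =
      ∑ j, (hA.eigenvalues j - c) * ‖hA.eigenvectorBasis.repr x j‖ ^ 2 := by
  set b := hA.eigenvectorBasis
  have hb (j : n) : ⟪b j, toEuclideanLin A x⟫_𝕜 = hA.eigenvalues j * ⟪b j, x⟫_𝕜 := by
    rw [← isSymmetric_toEuclideanLin_iff.mpr hA, toEuclideanLin_eigenvectorBasis, inner_smul_left,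
      RCLike.conj_ofReal]
  rw [← b.sum_inner_mul_inner, map_sum, ← b.sum_sq_norm_inner_right, Finset.mul_sum,
    ← Finset.sum_sub_distrib]
  refine Finset.sum_congr rfl fun j _ => ?_
  rw [hb, b.repr_apply_apply, mul_left_comm, ← inner_conj_symm x, RCLike.re_ofReal_mul,
    RCLike.conj_mul]
  norm_cast
  ring

lemma mul_norm_sq_le_re_inner_of_mem_span (hA : A.IsHermitian) {c : ℝ} {s : Set n}
    (hs : ∀ j ∈ s, c ≤ hA.eigenvalues j) {x : EuclideanSpace 𝕜 n}
    (hx : x ∈ Submodule.span 𝕜 (hA.eigenvectorBasis '' s)) :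
    c * ‖x‖ ^ 2 ≤ RCLike.re ⟪x, toEuclideanLin A x⟫_𝕜 := by
  rw [← sub_nonneg, hA.re_inner_toEuclideanLin_sub_mul_norm_sq]
  refine Finset.sum_nonneg fun j _ => ?_
  by_cases hj : j ∈ s
  · exact mul_nonneg (sub_nonneg.mpr (hs j hj)) (sq_nonneg _)
  · simp [hA.eigenvectorBasis.repr_apply_eq_zero_of_mem_span hx hj]

lemma re_inner_le_mul_norm_sq_of_mem_span (hA : A.IsHermitian) {c : ℝ} {s : Set n}
    (hs : ∀ j ∈ s, hA.eigenvalues j ≤ c) {x : EuclideanSpace 𝕜 n}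
    (hx : x ∈ Submodule.span 𝕜 (hA.eigenvectorBasis '' s)) :
    RCLike.re ⟪x, toEuclideanLin A x⟫_𝕜 ≤ c * ‖x‖ ^ 2 := by
  rw [← sub_nonpos, hA.re_inner_toEuclideanLin_sub_mul_norm_sq]
  refine Finset.sum_nonpos fun j _ => ?_
  by_cases hj : j ∈ s
  · exact mul_nonpos_of_nonpos_of_nonneg (sub_nonpos.mpr (hs j hj)) (sq_nonneg _)
  · simp [hA.eigenvectorBasis.repr_apply_eq_zero_of_mem_span hx hj]

lemma sum_eigenvalues_comp_equiv (hA : A.IsHermitian) {m : ℕ} (σ : Fin m ≃ n) :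
    ∑ i, hA.eigenvalues (σ i) = RCLike.re A.trace := by
  rw [hA.trace_eq_sum_eigenvalues, map_sum, σ.sum_comp (hA.eigenvalues ·)]
  simp

theorem eigenvalues_le_of_posSemidef_sub (hA : A.IsHermitian) (hB : B.IsHermitian)
    (hAB : (B - A).PosSemidef) {m : ℕ} {σ τ : Fin m ≃ n} (hσ : Antitone (hA.eigenvalues ∘ σ))
    (hτ : Antitone (hB.eigenvalues ∘ τ)) (i : Fin m) :
    hA.eigenvalues (σ i) ≤ hB.eigenvalues (τ i) := by
  classical
  -- Courant–Fischer: `U` (top `i + 1` eigenvectors of `A`) and `V` (bottom `m - i` eigenvectors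
  -- of `B`) have dimensions adding up to `m + 1`, so they share a nonzero vector `x`, and then
  -- `λᵢ(A) ‖x‖² ≤ ⟪x, A x⟫ ≤ ⟪x, B x⟫ ≤ λᵢ(B) ‖x‖²`.
  set U := Submodule.span 𝕜 (hA.eigenvectorBasis '' ((Finset.Iic i).map σ.toEmbedding))
  set V := Submodule.span 𝕜 (hB.eigenvectorBasis '' ((Finset.Ici i).map τ.toEmbedding))
  obtain ⟨x, hxU, hxV, hx⟩ : ∃ x ∈ U, x ∈ V ∧ x ≠ 0 := by
    have hdim :
        Module.finrank 𝕜 (EuclideanSpace 𝕜 n) < Module.finrank 𝕜 U + Module.finrank 𝕜 V := by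
      rw [OrthonormalBasis.finrank_span_image, OrthonormalBasis.finrank_span_image,
        finrank_euclideanSpace, Finset.card_map, Finset.card_map, Fin.card_Iic, Fin.card_Ici,
        ← Fintype.card_congr σ, Fintype.card_fin]
      omega
    by_contra! h
    exact hdim.not_ge (Submodule.finrank_add_finrank_le_of_disjoint
      (Submodule.disjoint_def.mpr fun x hxU hxV => h x hxU hxV))
  have hlow : hA.eigenvalues (σ i) * ‖x‖ ^ 2 ≤ RCLike.re ⟪x, toEuclideanLin A x⟫_𝕜 := by
    refine hA.mul_norm_sq_le_re_inner_of_mem_span ?_ hxU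
    simp only [Finset.coe_map, Set.mem_image, Finset.mem_coe, Finset.mem_Iic]
    rintro _ ⟨j, hji, rfl⟩
    exact hσ hji
  have hup : RCLike.re ⟪x, toEuclideanLin B x⟫_𝕜 ≤ hB.eigenvalues (τ i) * ‖x‖ ^ 2 := by
    refine hB.re_inner_le_mul_norm_sq_of_mem_span ?_ hxV
    simp only [Finset.coe_map, Set.mem_image, Finset.mem_coe, Finset.mem_Ici]
    rintro _ ⟨j, hij, rfl⟩
    exact hτ hij
  exact le_of_mul_le_mul_right
    (hlow.trans ((re_inner_toEuclideanLin_le_of_posSemidef_sub hAB x).trans hup)) (by positivity)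

theorem sum_abs_sub_eigenvalues_of_posSemidef_sub (hA : A.IsHermitian) (hB : B.IsHermitian)
    (hAB : (B - A).PosSemidef) {m : ℕ} {σ τ : Fin m ≃ n} (hσ : Antitone (hA.eigenvalues ∘ σ))
    (hτ : Antitone (hB.eigenvalues ∘ τ)) :
    ∑ i, |hB.eigenvalues (τ i) - hA.eigenvalues (σ i)| = RCLike.re (B - A).trace := by
  rw [trace_sub, map_sub, ← hA.sum_eigenvalues_comp_equiv σ, ← hB.sum_eigenvalues_comp_equiv τ,
    ← Finset.sum_sub_distrib]
  exact Finset.sum_congr rfl fun i _ =>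
    abs_of_nonneg (sub_nonneg.mpr (eigenvalues_le_of_posSemidef_sub hA hB hAB hσ hτ i))

end IsHermitian

end Matrix

lemma exists_perm_antitone_comp {α : Type*} [LinearOrder α] {d : ℕ} (f : Fin d → α) :
    ∃ σ : Equiv.Perm (Fin d), Antitone (f ∘ σ) :=
  ⟨Fin.revPerm.trans (Tuple.sort f), fun _ _ hab => Tuple.monotone_sort f (Fin.rev_le_rev.mpr hab)⟩

/-- If `M` and `M′ = M − uu* + vv*` are neighboring PSD Hermitian matrices with
`‖u‖₂ ≤ 1`, `‖v‖₂ ≤ 1`, then the ℓ¹ distance between their sorted eigenvalue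
vectors is at most `2`. Here `f` and `g` are the eigenvalues of `M` and `M′`
respectively, listed in nonincreasing order. -/
theorem eigenvalue_l1_distance_neighbors {d : ℕ}
    {M M' : Matrix (Fin d) (Fin d) ℂ}
    (hM : M.PosSemidef) (hM' : M'.PosSemidef)
    (u v : EuclideanSpace ℂ (Fin d)) (hu : ‖u‖ ≤ 1) (hv : ‖v‖ ≤ 1)
    (hnbr : M' = M - Matrix.vecMulVec (u : Fin d → ℂ) (star (u : Fin d → ℂ))
      + Matrix.vecMulVec (v : Fin d → ℂ) (star (v : Fin d → ℂ)))
    (f g : Fin d → ℝ) (hf : Antitone f) (hg : Antitone g)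
    (σ τ : Equiv.Perm (Fin d))
    (hfσ : f = hM.isHermitian.eigenvalues ∘ σ)
    (hgτ : g = hM'.isHermitian.eigenvalues ∘ τ) :
    ∑ i, |f i - g i| ≤ 2 := by
  set A := M - vecMulVec u.ofLp (star u.ofLp)
  have hA : A.IsHermitian := hM.isHermitian.sub (posSemidef_vecMulVec_self_star _).isHermitian
  have hMA : M - A = vecMulVec u.ofLp (star u.ofLp) := sub_sub_cancel _ _
  have hM'A : M' - A = vecMulVec v.ofLp (star v.ofLp) := by rw [hnbr]; abel
  obtain ⟨ρ, hρ⟩ := exists_perm_antitone_comp hA.eigenvalues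
  have hfA : ∑ i, |f i - hA.eigenvalues (ρ i)| = ‖u‖ ^ 2 := by
    rw [hfσ, ← re_trace_vecMulVec_self_star, ← hMA]
    exact hA.sum_abs_sub_eigenvalues_of_posSemidef_sub hM.isHermitian
      (hMA ▸ posSemidef_vecMulVec_self_star _) hρ (hfσ ▸ hf)
  have hgA : ∑ i, |g i - hA.eigenvalues (ρ i)| = ‖v‖ ^ 2 := by
    rw [hgτ, ← re_trace_vecMulVec_self_star, ← hM'A]
    exact hA.sum_abs_sub_eigenvalues_of_posSemidef_sub hM'.isHermitian
      (hM'A ▸ posSemidef_vecMulVec_self_star _) hρ (hgτ ▸ hg)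
  calc ∑ i, |f i - g i| ≤ ∑ i, (|f i - hA.eigenvalues (ρ i)| + |g i - hA.eigenvalues (ρ i)|) :=
        Finset.sum_le_sum fun i _ => (abs_sub_le (f i) (hA.eigenvalues (ρ i)) (g i)).trans_eq
          (by rw [abs_sub_comm _ (g i)])
    _ = ‖u‖ ^ 2 + ‖v‖ ^ 2 := by rw [Finset.sum_add_distrib, hfA, hgA]
    _ ≤ 1 + 1 := add_le_add (pow_le_one₀ (norm_nonneg u) hu) (pow_le_one₀ (norm_nonneg v) hv)
    _ = 2 := one_add_one_eq_two
end

section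
/- Let Λ = diag(λ₁,…,λ_k,0,…,0) be a d×d diagonal PSD matrix with λ₁ ≥ ⋯ ≥ λ_k > 0, and let O_Λ = {UΛU* : U ∈ U(d)} be its unitary orbit. Then for every ζ > 0, the covering number of O_Λ with respect to the spectral norm satisfies N(O_Λ, ‖·‖₂, ζ) ≤ (1 + 8λ₁/ζ)^{2dk}. -/
open Matrix

/-- The spectral (ℓ²→ℓ² operator) norm of a complex matrix. -/
noncomputable def opNorm {m n : ℕ} (X : Matrix (Fin m) (Fin n) ℂ) : ℝ :=
  ‖LinearMap.toContinuousLinearMap (Matrix.toEuclideanLin X)‖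

/-- `C` is a `ζ`-covering of `S` for the distance `dist`: the centers lie in `S` and every
point of `S` is within distance `ζ` of some center. -/
def IsCover {α : Type*} (dist : α → α → ℝ) (S : Set α) (ζ : ℝ) (C : Finset α) : Prop :=
  ↑C ⊆ S ∧ ∀ x ∈ S, ∃ c ∈ C, dist x c ≤ ζ

/-!
Write `Λ = Pᴴ D P`, where `P` is the first `k` rows of the identity and `D = diag(λ₁, …, λ_k)`.
The orbit is then the image of the matrices `P Uᴴ`, `U` unitary, under `M ↦ Mᴴ D M`. These have
orthonormal rows, so they lie in the unit ball of the `2dk`-dimensional real space of `k × d`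
complex matrices, on which the map is `2λ₁`-Lipschitz. A maximal `ζ/(2λ₁)`-separated subset of
them is a cover with centres in the set, and comparing the volume of the disjoint balls of half
that radius around its points with that of a slightly larger unit ball bounds its size by
`(1 + 4λ₁/ζ)^(2dk)`. Its image is the required cover of the orbit.
-/

open Module MeasureTheory
open scoped NNReal ENNReal Matrix.Norms.L2Operator

theorem Metric.IsCover.image_of_lipschitzOnWith {X Y : Type*} [PseudoEMetricSpace X]
    [PseudoEMetricSpace Y] {f : X → Y} {s N : Set X} {ε K : ℝ≥0} (hs : IsCover ε s N)
    (hN : N ⊆ s) (hf : LipschitzOnWith K f s) : IsCover (K * ε) (f '' s) (f '' N) := by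
  rintro _ ⟨x, hx, rfl⟩
  obtain ⟨y, hy, hxy⟩ := hs hx
  refine ⟨f y, Set.mem_image_of_mem f hy, ?_⟩
  calc edist (f x) (f y) ≤ K * edist x y := hf hx (hN hy)
    _ ≤ K * ε := by gcongr; exact hxy

theorem Metric.IsCover.isCover_norm_sub {E : Type*} [SeminormedAddCommGroup E] {ε : ℝ≥0}
    {s : Set E} {C : Finset E} (hsC : IsCover ε s C) (hCs : ↑C ⊆ s) :
    _root_.IsCover (fun x y => ‖x - y‖) s ε C := by
  refine ⟨hCs, fun x hx => ?_⟩
  simpa [dist_eq_norm] using hsC.subset_iUnion_closedBall hx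

section Packing

variable {E : Type*} [NormedAddCommGroup E] [NormedSpace ℝ E] [FiniteDimensional ℝ E]

theorem Metric.IsSeparated.card_le_of_subset_closedBall {ε : ℝ≥0} (hε : 0 < ε) {s : Finset E}
    (hs : (s : Set E) ⊆ closedBall 0 1) (hsep : IsSeparated ε (s : Set E)) :
    (s.card : ℝ) ≤ (1 + 2 / ε) ^ finrank ℝ E := by
  borelize E
  let μ : Measure E := .addHaar
  have hr : (0 : ℝ) < ε / 2 := by positivity
  have hdisj : (s : Set E).PairwiseDisjoint fun c => ball c (ε / 2) := by
    intro x hx y hy hxy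
    refine ball_disjoint_ball ?_
    have : (ε : ℝ≥0∞) < edist x y := hsep hx hy hxy
    rw [edist_nndist, ENNReal.coe_lt_coe, ← NNReal.coe_lt_coe, coe_nndist] at this
    linarith
  have hsub : (⋃ c ∈ s, ball c (ε / 2)) ⊆ ball (0 : E) (1 + ε / 2) :=
    Set.iUnion₂_subset fun c hc => ball_subset_ball' <| by
      rw [dist_zero_right]
      linarith [mem_closedBall_zero_iff.mp (hs hc)]
  have hvol : (s.card : ℝ≥0∞) * ENNReal.ofReal ((ε / 2) ^ finrank ℝ E) * μ (ball 0 1) ≤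
      ENNReal.ofReal ((1 + ε / 2) ^ finrank ℝ E) * μ (ball 0 1) := calc
    _ = μ (⋃ c ∈ s, ball c (ε / 2)) := by
      rw [measure_biUnion_finset hdisj fun c _ => measurableSet_ball]
      simp only [μ.addHaar_ball_of_pos _ hr, Finset.sum_const, nsmul_eq_mul, mul_assoc]
    _ ≤ μ (ball 0 (1 + ε / 2)) := measure_mono hsub
    _ = _ := μ.addHaar_ball_of_pos _ (by positivity)
  rw [ENNReal.mul_le_mul_iff_left (measure_ball_pos μ _ one_pos).ne' measure_ball_lt_top.ne,
    ← ENNReal.ofReal_natCast, ← ENNReal.ofReal_mul (by positivity),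
    ENNReal.ofReal_le_ofReal_iff (by positivity), ← le_div_iff₀ (by positivity), ← div_pow] at hvol
  rwa [show (1 + 2 / ε : ℝ) = (1 + ε / 2) / (ε / 2) by field_simp; ring]

theorem Metric.packingNumber_le_of_subset_closedBall {ε : ℝ≥0} (hε : 0 < ε) {A : Set E}
    (hA : A ⊆ closedBall 0 1) :
    packingNumber ε A ≤ ⌊(1 + 2 / (ε : ℝ)) ^ finrank ℝ E⌋₊ := by
  refine iSup₂_le fun C hCA => iSup_le fun hsep => ?_
  by_contra! hlt
  obtain ⟨t, htC, ht⟩ := Set.exists_subset_encard_eq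
    (k := ((⌊(1 + 2 / (ε : ℝ)) ^ finrank ℝ E⌋₊ + 1 : ℕ) : ℕ∞))
    (by exact_mod_cast Order.add_one_le_of_lt hlt)
  have htfin : t.Finite := Set.finite_of_encard_eq_coe ht
  have hcard := IsSeparated.card_le_of_subset_closedBall hε (s := htfin.toFinset)
    (by simpa using htC.trans (hCA.trans hA)) (by simpa using hsep.subset htC)
  rw [← Set.ncard_eq_toFinset_card t htfin, Set.ncard_def, ht, ENat.toNat_natCast] at hcard
  exact (Nat.lt_floor_add_one _).not_ge (by exact_mod_cast hcard)

theorem Metric.exists_finset_isCover_card_le {ε : ℝ≥0} (hε : 0 < ε) {A : Set E}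
    (hA : A ⊆ closedBall 0 1) :
    ∃ C : Finset E, ↑C ⊆ A ∧ IsCover ε A C ∧ (C.card : ℝ) ≤ (1 + 2 / ε) ^ finrank ℝ E := by
  have hfin : packingNumber ε A ≠ ⊤ :=
    ne_top_of_le_ne_top (ENat.natCast_ne_top _) (packingNumber_le_of_subset_closedBall hε hA)
  have hC : (maximalSeparatedSet ε A).Finite := by
    rw [← Set.encard_ne_top_iff, encard_maximalSeparatedSet hfin]
    exact hfin
  refine ⟨hC.toFinset, by simpa using maximalSeparatedSet_subset,
    by simpa using isCover_maximalSeparatedSet hfin, ?_⟩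
  exact IsSeparated.card_le_of_subset_closedBall hε
    (by simpa using maximalSeparatedSet_subset.trans hA)
    (by simpa using isSeparated_maximalSeparatedSet)

theorem exists_isCover_image_card_le {F : Type*} [SeminormedAddCommGroup F] {f : E → F}
    {K : ℝ≥0} (hK : 0 < K) (hf : LipschitzOnWith K f (Metric.closedBall 0 1)) {A : Set E}
    (hA : A ⊆ Metric.closedBall 0 1) {ζ : ℝ} (hζ : 0 < ζ) :
    ∃ C : Finset F, IsCover (fun x y => ‖x - y‖) (f '' A) ζ C ∧
      (C.card : ℝ) ≤ (1 + 2 * K / ζ) ^ finrank ℝ E := by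
  classical
  have hε : ζ / K = ((ζ / K).toNNReal : ℝ) := (Real.coe_toNNReal _ (by positivity)).symm
  obtain ⟨C, hCA, hCcov, hCcard⟩ :=
    Metric.exists_finset_isCover_card_le (ε := (ζ / K).toNNReal) (by positivity) hA
  have hcov := hCcov.image_of_lipschitzOnWith hCA (hf.mono hA)
  rw [← Finset.coe_image] at hcov
  refine ⟨C.image f, ?_, ?_⟩
  · convert hcov.isCover_norm_sub (by simpa using Set.image_mono hCA)
    rw [NNReal.coe_mul, ← hε]
    field_simp
  · calc ((C.image f).card : ℝ) ≤ C.card := by exact_mod_cast Finset.card_image_le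
      _ ≤ _ := hCcard
      _ = _ := by rw [← hε]; field_simp

end Packing

namespace Matrix

section Selection

variable {α : Type*} [CommRing α] [StarRing α]

theorem one_submatrix_mul_conjTranspose {m n : Type*} [DecidableEq m] [DecidableEq n]
    [Fintype n] {e : m → n} (he : Function.Injective e) :
    (1 : Matrix n n α).submatrix e id * ((1 : Matrix n n α).submatrix e id)ᴴ = 1 := by
  rw [conjTranspose_submatrix, conjTranspose_one,
    ← submatrix_mul _ _ e id e Function.bijective_id, Matrix.one_mul, submatrix_one e he]

theorem one_submatrix_mul_conjTranspose_of_mem_unitaryGroup {m n : Type*} [DecidableEq m]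
    [DecidableEq n] [Fintype n] {e : m → n} (he : Function.Injective e) {U : Matrix n n α}
    (hU : U ∈ unitaryGroup n α) :
    (1 : Matrix n n α).submatrix e id * Uᴴ * ((1 : Matrix n n α).submatrix e id * Uᴴ)ᴴ = 1 := by
  rw [conjTranspose_mul, conjTranspose_conjTranspose, Matrix.mul_assoc, ← Matrix.mul_assoc Uᴴ,
    ← star_eq_conjTranspose, mem_unitaryGroup_iff'.mp hU, Matrix.one_mul,
    one_submatrix_mul_conjTranspose he]

theorem diagonal_dite_lt_eq {k d : ℕ} (hkd : k ≤ d) (v : Fin k → α) :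
    diagonal (fun i : Fin d => if h : (i : ℕ) < k then v ⟨i, h⟩ else 0) =
      ((1 : Matrix (Fin d) (Fin d) α).submatrix (Fin.castLE hkd) id)ᴴ * diagonal v *
        (1 : Matrix (Fin d) (Fin d) α).submatrix (Fin.castLE hkd) id := by
  ext a b
  rw [mul_apply, diagonal_apply]
  simp only [mul_diagonal, conjTranspose_submatrix, conjTranspose_one, submatrix_apply, id,
    one_apply]
  by_cases ha : (a : ℕ) < k
  · rw [Fintype.sum_eq_single ⟨a, ha⟩ fun i hi => by simp [Fin.ext_iff] at hi ⊢; grind]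
    simp [ha, Fin.ext_iff]
  · rw [Finset.sum_eq_zero fun i _ => by simp [Fin.ext_iff]; grind]
    simp [ha]

theorem unitary_conj_diagonal_dite_lt_eq_image {k d : ℕ} (hkd : k ≤ d) (v : Fin k → α) :
    {H | ∃ U ∈ unitaryGroup (Fin d) α,
      H = U * diagonal (fun i : Fin d => if h : (i : ℕ) < k then v ⟨i, h⟩ else 0) * Uᴴ} =
      (fun M => Mᴴ * diagonal v * M) ''
        ((fun U => (1 : Matrix (Fin d) (Fin d) α).submatrix (Fin.castLE hkd) id * Uᴴ) ''
          (unitaryGroup (Fin d) α : Set (Matrix (Fin d) (Fin d) α))) := by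
  rw [diagonal_dite_lt_eq hkd, Set.image_image]
  ext H
  simp only [conjTranspose_mul, conjTranspose_conjTranspose, Matrix.mul_assoc]
  simp [eq_comm]

end Selection

variable {𝕜 : Type*} [RCLike 𝕜] {m n : Type*} [Fintype m] [Fintype n] [DecidableEq m]
  [DecidableEq n]

theorem l2_opNorm_le_one_of_mul_conjTranspose_eq_one {M : Matrix m n 𝕜} (hM : M * Mᴴ = 1) :
    ‖M‖ ≤ 1 := by
  have h := l2_opNorm_conjTranspose_mul_self Mᴴ
  rw [conjTranspose_conjTranspose, hM, l2_opNorm_conjTranspose] at h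
  have hone : ‖(1 : Matrix m m 𝕜)‖ ≤ 1 := by
    rw [cstar_norm_def, map_one]
    exact ContinuousLinearMap.norm_id_le
  nlinarith [norm_nonneg M]

theorem lipschitzOnWith_conjTranspose_mul_mul (D : Matrix m m 𝕜) :
    LipschitzOnWith (2 * ‖D‖₊) (fun M : Matrix m n 𝕜 => Mᴴ * D * M) (Metric.closedBall 0 1) := by
  refine LipschitzOnWith.of_dist_le_mul fun A hA B hB => ?_
  rw [mem_closedBall_zero_iff] at hA hB
  have hAB : Aᴴ * D * A - Bᴴ * D * B = Aᴴ * D * (A - B) + (A - B)ᴴ * D * B := by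
    rw [conjTranspose_sub, Matrix.mul_sub, Matrix.sub_mul, Matrix.sub_mul]
    abel
  have h₁ : ‖Aᴴ * D * (A - B)‖ ≤ ‖D‖ * ‖A - B‖ := calc
    _ ≤ ‖Aᴴ‖ * ‖D‖ * ‖A - B‖ := (l2_opNorm_mul _ _).trans (by gcongr; exact l2_opNorm_mul _ _)
    _ ≤ 1 * ‖D‖ * ‖A - B‖ := by rw [l2_opNorm_conjTranspose]; gcongr
    _ = ‖D‖ * ‖A - B‖ := by ring
  have h₂ : ‖(A - B)ᴴ * D * B‖ ≤ ‖D‖ * ‖A - B‖ := calc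
    _ ≤ ‖(A - B)ᴴ‖ * ‖D‖ * ‖B‖ := (l2_opNorm_mul _ _).trans (by gcongr; exact l2_opNorm_mul _ _)
    _ ≤ ‖A - B‖ * ‖D‖ * 1 := by rw [l2_opNorm_conjTranspose]; gcongr
    _ = ‖D‖ * ‖A - B‖ := by ring
  simp only [dist_eq_norm, hAB, NNReal.coe_mul, NNReal.coe_ofNat, coe_nnnorm]
  linarith [norm_add_le (Aᴴ * D * (A - B)) ((A - B)ᴴ * D * B)]

end Matrix

/-- **Covering number of the unitary orbit.** For `Λ = diag(λ₁,…,λ_k,0,…,0)` with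
`λ₁ ≥ ⋯ ≥ λ_k > 0`, the orbit `O_Λ = {UΛU* : U unitary}` admits, for every `ζ > 0`,
a spectral-norm `ζ`-covering of cardinality at most `(1 + 8λ₁/ζ)^(2dk)`. -/
theorem orbit_covering_number {d k : ℕ} (hk : 0 < k) (hkd : k ≤ d)
    (lam : Fin k → ℝ) (hmono : Antitone lam) (hpos : ∀ i, 0 < lam i)
    (ζ : ℝ) (hζ : 0 < ζ) :
    ∃ C : Finset (Matrix (Fin d) (Fin d) ℂ),
      IsCover (fun X Y => opNorm (X - Y))
        {H | ∃ U ∈ Matrix.unitaryGroup (Fin d) ℂ,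
          H = U * Matrix.diagonal
              (fun i : Fin d => if h : (i : ℕ) < k then (lam ⟨i, h⟩ : ℂ) else 0) * Uᴴ}
        ζ C ∧
      (C.card : ℝ) ≤ (1 + 8 * lam ⟨0, hk⟩ / ζ) ^ (2 * d * k) := by
  set D : Matrix (Fin k) (Fin k) ℂ := diagonal fun i => (lam i : ℂ)
  have hD : ‖D‖ ≤ lam ⟨0, hk⟩ := by
    rw [l2_opNorm_diagonal, pi_norm_le_iff_of_nonneg (hpos _).le]
    intro i
    rw [Complex.norm_real, Real.norm_of_nonneg (hpos i).le]
    exact hmono (Nat.zero_le _)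
  have hlip : LipschitzOnWith (2 * (lam ⟨0, hk⟩).toNNReal)
      (fun M : Matrix (Fin k) (Fin d) ℂ => Mᴴ * D * M) (Metric.closedBall 0 1) :=
    (lipschitzOnWith_conjTranspose_mul_mul D).weaken <| by
      gcongr
      exact Real.le_toNNReal_iff_coe_le (hpos _).le |>.mpr hD
  have hrows : (fun U => (1 : Matrix (Fin d) (Fin d) ℂ).submatrix (Fin.castLE hkd) id * Uᴴ) ''
      (unitaryGroup (Fin d) ℂ : Set (Matrix (Fin d) (Fin d) ℂ)) ⊆ Metric.closedBall 0 1 := by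
    rintro _ ⟨U, hU, rfl⟩
    exact mem_closedBall_zero_iff.mpr <| l2_opNorm_le_one_of_mul_conjTranspose_eq_one <|
      one_submatrix_mul_conjTranspose_of_mem_unitaryGroup (Fin.castLE_injective hkd) hU
  obtain ⟨C, hcov, hcard⟩ := exists_isCover_image_card_le (by simpa using hpos _) hlip hrows hζ
  refine ⟨C, unitary_conj_diagonal_dite_lt_eq_image hkd (fun i => (lam i : ℂ)) ▸ hcov,
    hcard.trans ?_⟩
  rw [finrank_matrix, Complex.finrank_real_complex, Fintype.card_fin, Fintype.card_fin,
    NNReal.coe_mul, Real.coe_toNNReal _ (hpos _).le, show k * d * 2 = 2 * d * k by ring]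
  have := hpos ⟨0, hk⟩
  gcongr (1 + ?_ / ζ) ^ _
  push_cast
  linarith
end

section
/- Let M₁ and M₂ be d×d positive semidefinite Hermitian matrices whose difference M₁ − M₂ is Hermitian. Then M₁ − M₂ can be written as Σ_{s=1}^{m} x_s x_s* − Σ_{t=1}^{m'} y_t y_t* where all vectors x_s, y_t ∈ ℂ^d have norm at most 1 and m + m′ ≤ ‖M₁ − M₂‖_F² + d. Consequently, if M₁ and M₂ are data matrices built from unit-norm data points, one can transform M₁ into M₂ by replacing at most ‖M₁ − M₂‖_F² + d data points. -/
/-!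
Diagonalize `D = M₁ - M₂ = ∑ⱼ μⱼ wⱼ wⱼᴴ` with orthonormal `wⱼ` and write `μⱼ = μⱼ⁺ - μⱼ⁻`.
A term `c w wᴴ` with `c ≥ 0` and `‖w‖ ≤ 1` is the sum of `⌈c⌉` copies of `x xᴴ`, where
`x = √(c / ⌈c⌉) w` has norm at most one. Eigenvalue `μⱼ` thus costs `⌈μⱼ⁺⌉ + ⌈μⱼ⁻⌉ = ⌈|μⱼ|⌉ ≤ μⱼ² + 1`
vectors, and `∑ⱼ μⱼ² = ‖D‖_F²`.
-/

open Matrix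
open scoped ComplexOrder

/-- The Frobenius norm of a complex matrix. -/
noncomputable def frobNorm {m n : ℕ} (X : Matrix (Fin m) (Fin n) ℂ) : ℝ :=
  Real.sqrt (∑ i, ∑ j, ‖X i j‖ ^ 2)

lemma Nat.ceil_le_sq_add_one (c : ℝ) : (⌈c⌉₊ : ℝ) ≤ c ^ 2 + 1 := by
  rcases le_or_gt c 1 with hc | hc
  · have : (⌈c⌉₊ : ℝ) ≤ 1 := by exact_mod_cast Nat.ceil_le.mpr (by exact_mod_cast hc)
    nlinarith
  · nlinarith [Nat.ceil_lt_add_one (by linarith : (0 : ℝ) ≤ c)]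

lemma Nat.ceil_posPart_add_ceil_negPart (a : ℝ) : ⌈a⁺⌉₊ + ⌈a⁻⌉₊ = ⌈|a|⌉₊ := by
  rcases le_total 0 a with ha | ha
  · simp [ha, abs_of_nonneg]
  · simp [ha, abs_of_nonpos]

namespace Matrix

variable {𝕜 n : Type*} [RCLike 𝕜]

lemma vecMulVec_smul_self (r : ℝ) (v : n → 𝕜) :
    vecMulVec (r • v) (star (r • v)) = r ^ 2 • vecMulVec v (star v) := by
  rw [star_smul, smul_vecMulVec, vecMulVec_smul, smul_smul, sq, star_trivial]

variable [Fintype n]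

lemma sum_norm_sq_eq_re_trace_conjTranspose_mul_self {m : Type*} [Fintype m]
    (A : Matrix m n 𝕜) : ∑ i, ∑ j, ‖A i j‖ ^ 2 = RCLike.re (Aᴴ * A).trace := by
  simp only [trace, diag_apply, mul_apply, conjTranspose_apply, map_sum, RCLike.star_def,
    RCLike.conj_mul]
  rw [Finset.sum_comm]
  norm_cast

def IsSumOfUnitBallOuterProducts (k : ℕ) (A : Matrix n n 𝕜) : Prop :=
  ∃ x : Fin k → EuclideanSpace 𝕜 n, (∀ s, ‖x s‖ ≤ 1) ∧
    A = ∑ s, vecMulVec (x s : n → 𝕜) (star (x s : n → 𝕜))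

namespace IsSumOfUnitBallOuterProducts

lemma zero : IsSumOfUnitBallOuterProducts 0 (0 : Matrix n n 𝕜) :=
  ⟨Fin.elim0, fun s => s.elim0, by simp⟩

lemma add {k l : ℕ} {A B : Matrix n n 𝕜} (hA : IsSumOfUnitBallOuterProducts k A)
    (hB : IsSumOfUnitBallOuterProducts l B) : IsSumOfUnitBallOuterProducts (k + l) (A + B) := by
  obtain ⟨x, hx, rfl⟩ := hA
  obtain ⟨y, hy, rfl⟩ := hB
  refine ⟨Fin.append x y, Fin.addCases (by simpa using hx) (by simpa using hy), ?_⟩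
  simp [Fin.sum_univ_add]

lemma sum {ι : Type*} (s : Finset ι) {k : ι → ℕ} {A : ι → Matrix n n 𝕜}
    (h : ∀ j ∈ s, IsSumOfUnitBallOuterProducts (k j) (A j)) :
    IsSumOfUnitBallOuterProducts (∑ j ∈ s, k j) (∑ j ∈ s, A j) := by
  classical
  induction s using Finset.induction_on with
  | empty => simpa using zero
  | insert j s hj ih =>
    rw [Finset.sum_insert hj, Finset.sum_insert hj]
    exact (h j (s.mem_insert_self j)).add (ih fun i hi => h i (Finset.mem_insert_of_mem hi))

lemma smul_vecMulVec_self {w : EuclideanSpace 𝕜 n} (hw : ‖w‖ ≤ 1) {c : ℝ} (hc : 0 ≤ c) :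
    IsSumOfUnitBallOuterProducts ⌈c⌉₊ (c • vecMulVec (w : n → 𝕜) (star (w : n → 𝕜))) := by
  rcases hc.eq_or_lt with rfl | hc
  · simpa using zero
  have hk : (0 : ℝ) < ⌈c⌉₊ := Nat.cast_pos.mpr (Nat.ceil_pos.mpr hc)
  refine ⟨fun _ => √(c / ⌈c⌉₊) • w, fun _ => ?_, ?_⟩
  · rw [norm_smul, Real.norm_of_nonneg (Real.sqrt_nonneg _)]
    refine mul_le_one₀ (Real.sqrt_le_one.mpr ?_) (norm_nonneg _) hw
    exact (div_le_one hk).mpr (Nat.le_ceil c)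
  · simp only [WithLp.ofLp_smul, vecMulVec_smul_self, Real.sq_sqrt (by positivity : 0 ≤ c / ⌈c⌉₊),
      Finset.sum_const, Finset.card_univ, Fintype.card_fin, ← Nat.cast_smul_eq_nsmul ℝ, smul_smul]
    rw [mul_div_cancel₀ _ hk.ne']

end IsSumOfUnitBallOuterProducts

variable [DecidableEq n]

lemma IsHermitian.eq_sum_smul_vecMulVec {A : Matrix n n 𝕜} (hA : A.IsHermitian) :
    A = ∑ j, hA.eigenvalues j •
      vecMulVec (hA.eigenvectorBasis j : n → 𝕜) (star (hA.eigenvectorBasis j : n → 𝕜)) := by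
  conv_lhs => rw [hA.spectral_theorem]
  ext i k
  simp only [Unitary.conjStarAlgAut_apply, diagonal, Function.comp_apply, mul_apply,
    eigenvectorUnitary_apply, of_apply, mul_ite, mul_zero, Finset.sum_ite_eq', Finset.mem_univ,
    ↓reduceIte, star_apply, RCLike.star_def, sum_apply, smul_apply, vecMulVec_apply, Pi.star_apply]
  refine Finset.sum_congr rfl fun j _ => ?_
  rw [RCLike.real_smul_eq_coe_mul]
  ring

lemma IsHermitian.trace_mul_self {A : Matrix n n 𝕜} (hA : A.IsHermitian) :
    (A * A).trace = ∑ j, ((hA.eigenvalues j ^ 2 : ℝ) : 𝕜) := by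
  conv_lhs => rw [hA.spectral_theorem, ← map_mul, Unitary.conjStarAlgAut_apply, trace_mul_cycle,
    Unitary.coe_star_mul_self, one_mul, diagonal_mul_diagonal, trace_diagonal]
  simp [sq]

lemma IsHermitian.sum_norm_sq_eq_sum_eigenvalues_sq {A : Matrix n n 𝕜} (hA : A.IsHermitian) :
    ∑ i, ∑ j, ‖A i j‖ ^ 2 = ∑ j, hA.eigenvalues j ^ 2 := by
  rw [sum_norm_sq_eq_re_trace_conjTranspose_mul_self, hA.eq, hA.trace_mul_self]
  simp

end Matrix

theorem difference_decomposition_general {d : ℕ}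
    (M₁ M₂ : Matrix (Fin d) (Fin d) ℂ)
    (hHerm : (M₁ - M₂).IsHermitian) :
    ∃ (m m' : ℕ) (x : Fin m → EuclideanSpace ℂ (Fin d))
      (y : Fin m' → EuclideanSpace ℂ (Fin d)),
      (∀ s, ‖x s‖ ≤ 1) ∧ (∀ t, ‖y t‖ ≤ 1) ∧
      M₁ - M₂ = (∑ s, Matrix.vecMulVec (x s : Fin d → ℂ) (star (x s : Fin d → ℂ)))
        - (∑ t, Matrix.vecMulVec (y t : Fin d → ℂ) (star (y t : Fin d → ℂ))) ∧
      (m + m' : ℝ) ≤ frobNorm (M₁ - M₂) ^ 2 + d := by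
  set μ := hHerm.eigenvalues
  set w := hHerm.eigenvectorBasis
  have hw (j : Fin d) : ‖w j‖ ≤ 1 := (w.orthonormal.1 j).le
  obtain ⟨x, hx, hpos⟩ := IsSumOfUnitBallOuterProducts.sum Finset.univ fun j _ =>
    IsSumOfUnitBallOuterProducts.smul_vecMulVec_self (hw j) (posPart_nonneg (μ j))
  obtain ⟨y, hy, hneg⟩ := IsSumOfUnitBallOuterProducts.sum Finset.univ fun j _ =>
    IsSumOfUnitBallOuterProducts.smul_vecMulVec_self (hw j) (negPart_nonneg (μ j))
  refine ⟨_, _, x, y, hx, hy, ?_, ?_⟩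
  · rw [← hpos, ← hneg, ← Finset.sum_sub_distrib]
    simp_rw [← sub_smul, posPart_sub_negPart]
    exact hHerm.eq_sum_smul_vecMulVec
  · rw [frobNorm, Real.sq_sqrt (by positivity), hHerm.sum_norm_sq_eq_sum_eigenvalues_sq]
    calc ((∑ j, ⌈(μ j)⁺⌉₊ : ℕ) : ℝ) + (∑ j, ⌈(μ j)⁻⌉₊ : ℕ)
        = ∑ j, (⌈|μ j|⌉₊ : ℝ) := by
          simp only [← Nat.cast_add, ← Finset.sum_add_distrib, Nat.ceil_posPart_add_ceil_negPart,
            Nat.cast_sum]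
      _ ≤ ∑ j, (μ j ^ 2 + 1) :=
          Finset.sum_le_sum fun j _ => sq_abs (μ j) ▸ Nat.ceil_le_sq_add_one |μ j|
      _ = ∑ j, μ j ^ 2 + d := by simp [Finset.sum_add_distrib]

/-- The difference of two PSD Hermitian matrices `M₁, M₂` can be written as
`Σ_s x_s x_s* − Σ_t y_t y_t*` with all vectors of norm at most `1` and
`m + m′ ≤ ‖M₁ − M₂‖_F² + d`. -/
theorem difference_decomposition {d : ℕ}
    (M₁ M₂ : Matrix (Fin d) (Fin d) ℂ)
    (h₁ : M₁.PosSemidef) (h₂ : M₂.PosSemidef)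
    (hHerm : (M₁ - M₂).IsHermitian) :
    ∃ (m m' : ℕ) (x : Fin m → EuclideanSpace ℂ (Fin d))
      (y : Fin m' → EuclideanSpace ℂ (Fin d)),
      (∀ s, ‖x s‖ ≤ 1) ∧ (∀ t, ‖y t‖ ≤ 1) ∧
      M₁ - M₂ = (∑ s, Matrix.vecMulVec (x s : Fin d → ℂ) (star (x s : Fin d → ℂ)))
        - (∑ t, Matrix.vecMulVec (y t : Fin d → ℂ) (star (y t : Fin d → ℂ))) ∧
      (m + m' : ℝ) ≤ frobNorm (M₁ - M₂) ^ 2 + d :=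
  difference_decomposition_general M₁ M₂ hHerm
end

section
/- Let M be a d×d Hermitian matrix with eigenvalues γ₁ ≥ ⋯ ≥ γ_d, let M̃ be the Hermitian matrix with the same eigenvectors as M (in order) but eigenvalues λ₁ ≥ ⋯ ≥ λ_d (i.e., M = UΓU*, M̃ = UΛU* for the same unitary U and Γ = diag(γ), Λ = diag(λ)). Let H be any matrix in the unitary orbit O_Λ of Λ. Then M̃ minimizes ‖M − Z‖_F over Z ∈ O_Λ, and consequently ‖M − H‖_F ≥ (1/2)·max(‖M − M̃‖_F, ‖M̃ − H‖_F). -/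
/-!
Conjugating by `U*` turns the distance from `M = UΓU*` to `Z = WΛW*` into the distance from `Γ`
to `QΛQ*` with `Q = U*W` unitary, and `‖Γ - QΛQ*‖_F = ‖ΓQ - QΛ‖_F`. The entries of `ΓQ - QΛ`
are `(γᵢ - λⱼ) Qᵢⱼ`, so `‖M - Z‖_F² = ∑ᵢⱼ (γᵢ - λⱼ)² |Qᵢⱼ|²`, a linear function of the
doubly stochastic matrix `(|Qᵢⱼ|²)`. By Birkhoff's theorem it is minimised at a permutation
matrix, and by the rearrangement inequality (`γ` and `λ` are sorted the same way) at the identity,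
which is the value at `Z = M̃`. The lower bound is then the triangle inequality
`‖M̃ - H‖_F ≤ ‖M̃ - M‖_F + ‖M - H‖_F ≤ 2 ‖M - H‖_F`.
-/

open Matrix

attribute [local instance] Matrix.frobeniusSeminormedAddCommGroup

section Frobenius

variable {𝕜 α m n : Type*} [Fintype m] [Fintype n]

theorem Matrix.frobenius_norm_sq [SeminormedAddCommGroup α] (X : Matrix m n α) :
    ‖X‖ ^ 2 = ∑ i, ∑ j, ‖X i j‖ ^ 2 := by
  rw [frobenius_norm_def, ← Real.rpow_natCast, ← Real.rpow_mul (by positivity)]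
  norm_num

variable [RCLike 𝕜]

theorem Matrix.frobenius_norm_sq_eq_re_trace (X : Matrix m n 𝕜) :
    ‖X‖ ^ 2 = RCLike.re (trace (Xᴴ * X)) := by
  simp only [frobenius_norm_sq, trace, diag, mul_apply, conjTranspose_apply, map_sum,
    RCLike.star_def, RCLike.conj_mul, ← RCLike.ofReal_pow, RCLike.ofReal_re]
  exact Finset.sum_comm

theorem Matrix.frobenius_norm_unitary_mul [DecidableEq m] {U : Matrix m m 𝕜}
    (hU : U ∈ unitaryGroup m 𝕜) (X : Matrix m n 𝕜) : ‖U * X‖ = ‖X‖ := by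
  refine (sq_eq_sq₀ (norm_nonneg _) (norm_nonneg _)).1 ?_
  rw [frobenius_norm_sq_eq_re_trace, frobenius_norm_sq_eq_re_trace, conjTranspose_mul,
    Matrix.mul_assoc, ← Matrix.mul_assoc Uᴴ, ← star_eq_conjTranspose,
    mem_unitaryGroup_iff'.1 hU, Matrix.one_mul]

variable [DecidableEq n]

theorem Matrix.frobenius_norm_mul_unitary {U : Matrix n n 𝕜} (hU : U ∈ unitaryGroup n 𝕜)
    (X : Matrix m n 𝕜) : ‖X * U‖ = ‖X‖ := by
  rw [← frobenius_norm_conjTranspose, conjTranspose_mul, ← star_eq_conjTranspose,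
    frobenius_norm_unitary_mul (Unitary.star_mem hU), frobenius_norm_conjTranspose]

theorem Matrix.frobenius_norm_sq_diagonal_mul_sub_mul_diagonal (a b : n → ℝ)
    (Q : Matrix n n 𝕜) :
    ‖diagonal (fun i => (a i : 𝕜)) * Q - Q * diagonal (fun i => (b i : 𝕜))‖ ^ 2 =
      ∑ i, ∑ j, (a i - b j) ^ 2 * ‖Q i j‖ ^ 2 := by
  rw [frobenius_norm_sq]
  refine Finset.sum_congr rfl fun i _ => Finset.sum_congr rfl fun j _ => ?_
  rw [sub_apply, diagonal_mul, mul_diagonal, mul_comm (Q i j), ← sub_mul, norm_mul, mul_pow,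
    ← RCLike.ofReal_sub, RCLike.norm_ofReal, sq_abs]

theorem Matrix.frobenius_norm_sq_unitary_conj_diagonal_sub {U W : Matrix n n 𝕜}
    (hU : U ∈ unitaryGroup n 𝕜) (hW : W ∈ unitaryGroup n 𝕜) (a b : n → ℝ) :
    ‖U * diagonal (fun i => (a i : 𝕜)) * Uᴴ - W * diagonal (fun i => (b i : 𝕜)) * Wᴴ‖ ^ 2 =
      ∑ i, ∑ j, (a i - b j) ^ 2 * ‖(Uᴴ * W) i j‖ ^ 2 := by
  have hU' : U * Uᴴ = 1 := mem_unitaryGroup_iff.1 hU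
  have hW' : W * Wᴴ = 1 := mem_unitaryGroup_iff.1 hW
  have hfactor :
      U * diagonal (fun i => (a i : 𝕜)) * Uᴴ - W * diagonal (fun i => (b i : 𝕜)) * Wᴴ =
        U * (diagonal (fun i => (a i : 𝕜)) * (Uᴴ * W) -
          (Uᴴ * W) * diagonal (fun i => (b i : 𝕜))) * star W := by
    simp only [star_eq_conjTranspose, Matrix.mul_sub, Matrix.sub_mul, Matrix.mul_assoc, hW',
      Matrix.mul_one]
    simp only [← Matrix.mul_assoc, hU', Matrix.one_mul]
  rw [hfactor, frobenius_norm_mul_unitary (Unitary.star_mem hW), frobenius_norm_unitary_mul hU,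
    frobenius_norm_sq_diagonal_mul_sub_mul_diagonal]

end Frobenius

theorem Matrix.normSq_mem_doublyStochastic {𝕜 ι : Type*} [RCLike 𝕜] [Fintype ι]
    [DecidableEq ι] {Q : Matrix ι ι 𝕜} (hQ : Q ∈ unitaryGroup ι 𝕜) :
    (of fun i j => ‖Q i j‖ ^ 2) ∈ doublyStochastic ℝ ι := by
  have row_sum : ∀ (P : Matrix ι ι 𝕜) (i : ι), P * star P = 1 → ∑ j, ‖P i j‖ ^ 2 = 1 := by
    intro P i hP
    have h := congrArg RCLike.re (congrFun (congrFun hP i) i)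
    simpa only [mul_apply, star_apply, RCLike.star_def, RCLike.mul_conj, one_apply_eq,
      map_sum, ← RCLike.ofReal_pow, RCLike.ofReal_re, RCLike.one_re] using h
  refine mem_doublyStochastic_iff_sum.2 ⟨fun i j => sq_nonneg _,
    fun i => row_sum Q i (mem_unitaryGroup_iff.1 hQ), fun j => ?_⟩
  simpa only [of_apply, conjTranspose_apply, norm_star] using
    row_sum Qᴴ j (by simpa [star_eq_conjTranspose] using mem_unitaryGroup_iff'.1 hQ)

section Rearrangement

variable {ι : Type*} [Fintype ι] {f g : ι → ℝ}

theorem Monovary.sum_sub_sq_le_sum_sub_comp_perm_sq (hfg : Monovary f g) (σ : Equiv.Perm ι) :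
    ∑ i, (f i - g i) ^ 2 ≤ ∑ i, (f i - g (σ i)) ^ 2 := by
  have hperm : ∑ i, g (σ i) ^ 2 = ∑ i, g i ^ 2 := Equiv.sum_comp σ (fun i => g i ^ 2)
  have hrearr := hfg.sum_mul_comp_perm_le_sum_mul (σ := σ)
  simp only [sub_sq, Finset.sum_add_distrib, Finset.sum_sub_distrib, mul_assoc,
    ← Finset.mul_sum, hperm] at hrearr ⊢
  linarith

theorem Monovary.sum_sub_sq_le_of_mem_doublyStochastic [DecidableEq ι] (hfg : Monovary f g)
    {D : Matrix ι ι ℝ} (hD : D ∈ doublyStochastic ℝ ι) :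
    ∑ i, (f i - g i) ^ 2 ≤ ∑ i, ∑ j, (f i - g j) ^ 2 * D i j := by
  let S := {X : Matrix ι ι ℝ | ∑ i, (f i - g i) ^ 2 ≤ ∑ i, ∑ j, (f i - g j) ^ 2 * X i j}
  have hS : Convex ℝ S := by
    refine convex_halfSpace_ge ⟨fun X Y => ?_, fun c X => ?_⟩ _
    · simp only [Matrix.add_apply, mul_add, Finset.sum_add_distrib]
    · simp only [Matrix.smul_apply, smul_eq_mul, Finset.mul_sum]
      exact Finset.sum_congr rfl fun i _ => Finset.sum_congr rfl fun j _ => by ring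
  have hperm : {σ.permMatrix ℝ | σ : Equiv.Perm ι} ⊆ S := by
    rintro _ ⟨σ, rfl⟩
    simpa [S, PEquiv.toMatrix_apply, eq_comm] using hfg.sum_sub_sq_le_sum_sub_comp_perm_sq σ
  rw [← SetLike.mem_coe, doublyStochastic_eq_convexHull_permMatrix] at hD
  exact convexHull_min hperm hS hD

end Rearrangement

theorem Matrix.frobenius_norm_unitary_conj_diagonal_sub_le {ι 𝕜 : Type*} [Fintype ι]
    [DecidableEq ι] [RCLike 𝕜] {a b : ι → ℝ} (hab : Monovary a b) {U W : Matrix ι ι 𝕜}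
    (hU : U ∈ unitaryGroup ι 𝕜) (hW : W ∈ unitaryGroup ι 𝕜) :
    ‖U * diagonal (fun i => (a i : 𝕜)) * Uᴴ - U * diagonal (fun i => (b i : 𝕜)) * Uᴴ‖ ≤
      ‖U * diagonal (fun i => (a i : 𝕜)) * Uᴴ - W * diagonal (fun i => (b i : 𝕜)) * Wᴴ‖ := by
  have hUW : Uᴴ * W ∈ unitaryGroup ι 𝕜 := mul_mem (Unitary.star_mem hU) hW
  have hU' : Uᴴ * U = 1 := mem_unitaryGroup_iff'.1 hU
  rw [← sq_le_sq₀ (norm_nonneg _) (norm_nonneg _),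
    frobenius_norm_sq_unitary_conj_diagonal_sub hU hU,
    frobenius_norm_sq_unitary_conj_diagonal_sub hU hW, hU']
  simpa [one_apply, apply_ite] using
    hab.sum_sub_sq_le_of_mem_doublyStochastic (normSq_mem_doublyStochastic hUW)

theorem half_max_norm_sub_le_of_norm_sub_le {E : Type*} [SeminormedAddCommGroup E]
    {a b c : E} (h : ‖a - b‖ ≤ ‖a - c‖) : 1 / 2 * max ‖a - b‖ ‖b - c‖ ≤ ‖a - c‖ := by
  have hbc : ‖b - c‖ ≤ ‖a - b‖ + ‖a - c‖ := by
    simpa only [norm_sub_rev b a] using norm_sub_le_norm_sub_add_norm_sub b a c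
  have hab : 0 ≤ ‖a - b‖ := norm_nonneg _
  rw [max_def]
  split_ifs <;> linarith

theorem frobNorm_eq_norm {m n : ℕ} (X : Matrix (Fin m) (Fin n) ℂ) : frobNorm X = ‖X‖ := by
  rw [frobNorm, ← frobenius_norm_sq, Real.sqrt_sq (norm_nonneg _)]

/-- Let `M = UΓU*` with eigenvalues `γ₁ ≥ ⋯ ≥ γ_d`, let `M̃ = UΛU*` have the same
eigenvectors but eigenvalues `λ₁ ≥ ⋯ ≥ λ_d`, and let `H = VΛV*` be any element of the
unitary orbit `O_Λ`. Then `M̃` minimizes `‖M − Z‖_F` over `Z ∈ O_Λ`, and consequently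
`‖M − H‖_F ≥ (1/2)·max(‖M − M̃‖_F, ‖M̃ − H‖_F)`. -/
theorem orbit_projection_and_lower_bound {d : ℕ} (γ lam : Fin d → ℝ)
    (hγ : Antitone γ) (hlam : Antitone lam)
    (U V : Matrix (Fin d) (Fin d) ℂ)
    (hU : U ∈ Matrix.unitaryGroup (Fin d) ℂ)
    (hV : V ∈ Matrix.unitaryGroup (Fin d) ℂ)
    (M Mt H : Matrix (Fin d) (Fin d) ℂ)
    (hM : M = U * Matrix.diagonal (fun i => (γ i : ℂ)) * Uᴴ)
    (hMt : Mt = U * Matrix.diagonal (fun i => (lam i : ℂ)) * Uᴴ)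
    (hH : H = V * Matrix.diagonal (fun i => (lam i : ℂ)) * Vᴴ) :
    (∀ Z : Matrix (Fin d) (Fin d) ℂ,
        (∃ W ∈ Matrix.unitaryGroup (Fin d) ℂ,
          Z = W * Matrix.diagonal (fun i => (lam i : ℂ)) * Wᴴ) →
        frobNorm (M - Mt) ≤ frobNorm (M - Z)) ∧
      (1 / 2) * max (frobNorm (M - Mt)) (frobNorm (Mt - H)) ≤ frobNorm (M - H) := by
  have hMt_min : ∀ W ∈ unitaryGroup (Fin d) ℂ,
      ‖M - Mt‖ ≤ ‖M - W * diagonal (fun i => (lam i : ℂ)) * Wᴴ‖ := fun W hW => by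
    rw [hM, hMt]
    exact frobenius_norm_unitary_conj_diagonal_sub_le (hγ.monovary hlam) hU hW
  simp only [frobNorm_eq_norm]
  refine ⟨?_, ?_⟩
  · rintro Z ⟨W, hW, rfl⟩
    exact hMt_min W hW
  · rw [hH]
    exact half_max_norm_sub_le_of_norm_sub_le (hMt_min V hV)
end
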